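/- Let m ∈ ℝ, R ≥ 1, C > 0, and let a be a bounded linear operator on ℓ²(ℤ) such that for all u ∈ ℓ²(ℤ), ∑_{n∈ℤ} |(a u)(n)|²·(n² + R²)^{−m} ≤ C²·∑_{n∈ℤ} |u(n)|². Then for every k ∈ ℤ the diagonal matrix entry satisfies |⟪e_k, a e_k⟫| ≤ C·(k² + R²)^{m/2}. -/

import Mathlib

noncomputable section

/-- `ℓ²(ℤ)`, the Hilbert space of square-summable complex sequences indexed by `ℤ`. -/
abbrev l2Z : Type := lp (fun _ : ℤ => ℂ) 2

/-- The standard orthonormal basis vector `e n` of `ℓ²(ℤ)`. -/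
def e (n : ℤ) : l2Z := lp.single 2 n 1

/-- The matrix entry `a_{ij} = ⟪e_i, A e_j⟫` of a bounded operator on `ℓ²(ℤ)`. -/
def matrixEntry (A : l2Z →L[ℂ] l2Z) (i j : ℤ) : ℂ := @inner ℂ _ _ (e i) (A (e j))

/-! Apply the order-`m` bound to `u = e k`: the weighted sum dominates its `k`-th term, so
`|a_kk|² (k² + R²)^(-m) ≤ C²`, and taking square roots gives the estimate. -/

theorem Real.le_mul_rpow_half_of_sq_mul_rpow_neg_le {x c w m : ℝ} (hc : 0 ≤ c) (hw : 0 < w)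
    (h : x ^ 2 * w ^ (-m) ≤ c ^ 2) : x ≤ c * w ^ (m / 2) := by
  have hwm : 0 < w ^ m := Real.rpow_pos_of_pos hw m
  have hsq : x ^ 2 ≤ (c * w ^ (m / 2)) ^ 2 :=
    calc x ^ 2 = x ^ 2 * w ^ (-m) * w ^ m := by
          rw [mul_assoc, ← Real.rpow_add hw, neg_add_cancel, Real.rpow_zero, mul_one]
      _ ≤ c ^ 2 * w ^ m := by gcongr
      _ = (c * w ^ (m / 2)) ^ 2 := by
          rw [mul_pow, ← Real.rpow_natCast (w ^ (m / 2)), ← Real.rpow_mul hw.le]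
          norm_num
  exact (le_abs_self x).trans (abs_le_of_sq_le_sq hsq (by positivity))

theorem matrixEntry_eq_apply (A : l2Z →L[ℂ] l2Z) (i j : ℤ) : matrixEntry A i j = A (e j) i := by
  simp [matrixEntry, e, lp.inner_single_left]

theorem tsum_norm_sq_e (k : ℤ) : ∑' n : ℤ, ‖e k n‖ ^ 2 = 1 := by
  have hterm : ∀ n : ℤ, ‖e k n‖ ^ 2 = if n = k then 1 else 0 := by
    intro n
    by_cases hn : n = k <;> simp [e, hn]
  simp only [hterm, tsum_ite_eq]

/-- if `a` is bounded with norm at most `C` from `ℓ²(ℤ)` to the weighted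
space with weight `μ_{-m,R}(n) = (n²+R²)^{-m}` (an operator of order `m`), then its
diagonal matrix entries satisfy `|⟪e_k, a e_k⟫| ≤ C (k²+R²)^{m/2}`. -/
theorem diagonal_entry_estimate_of_order_m
    (m R C : ℝ) (hR : 1 ≤ R) (hC : 0 < C) (a : l2Z →L[ℂ] l2Z)
    (h : ∀ u : l2Z,
      Summable (fun n : ℤ => ‖(a u) n‖ ^ 2 * ((n : ℝ) ^ 2 + R ^ 2) ^ (-m)) ∧
      ∑' n : ℤ, ‖(a u) n‖ ^ 2 * ((n : ℝ) ^ 2 + R ^ 2) ^ (-m) ≤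
        C ^ 2 * ∑' n : ℤ, ‖u n‖ ^ 2) :
    ∀ k : ℤ, ‖matrixEntry a k k‖ ≤ C * ((k : ℝ) ^ 2 + R ^ 2) ^ (m / 2) := by
  intro k
  have hR₀ : 0 < R := by linarith
  have hweight : ∀ n : ℤ, 0 < (n : ℝ) ^ 2 + R ^ 2 := fun n => by positivity
  obtain ⟨hsum, hle⟩ := h (e k)
  have hdiag : ‖a (e k) k‖ ^ 2 * ((k : ℝ) ^ 2 + R ^ 2) ^ (-m) ≤ C ^ 2 :=
    calc _ ≤ ∑' n : ℤ, ‖a (e k) n‖ ^ 2 * ((n : ℝ) ^ 2 + R ^ 2) ^ (-m) :=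
          hsum.le_tsum k fun n _ => by have := hweight n; positivity
      _ ≤ C ^ 2 * ∑' n : ℤ, ‖e k n‖ ^ 2 := hle
      _ = C ^ 2 := by rw [tsum_norm_sq_e, mul_one]
  rw [matrixEntry_eq_apply]
  exact Real.le_mul_rpow_half_of_sq_mul_rpow_neg_le hC.le (hweight k) hdiag
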